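/- Split conformal upper coverage bound: Let s_1, ..., s_n, s_{n+1} be exchangeable real random variables that are almost surely distinct, and let τ be the ⌈(n+1)(1−α)⌉-th smallest value among s_1, ..., s_n (with ⌈(n+1)(1−α)⌉ ≤ n). Then P(s_{n+1} ≤ τ) ≤ 1 − α + 1/(n+1). -/

import Mathlib

/-!
Off a null set the scores are distinct. By exchangeability the events "score `i` has fewer
than `k` scores strictly below it" all have the same probability, and for distinct scores
exactly `k` of them occur, so each has probability `k / (n + 1)`. On the other hand
`s_{n+1} ≤ τ` says precisely that fewer than `k` of `s₁, …, sₙ` lie strictly below `s_{n+1}`,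
and `k = ⌈(n + 1)(1 - α)⌉ < (n + 1)(1 - α) + 1`.
-/

open MeasureTheory Finset
open scoped ENNReal

namespace Tuple

variable {α : Type*} [LinearOrder α]

def rank {ι : Type*} [Fintype ι] (w : ι → α) (i : ι) : ℕ := #{j | w j < w i}

theorem rank_comp_perm {ι : Type*} [Fintype ι] (w : ι → α) (π : Equiv.Perm ι) (i : ι) :
    rank (w ∘ π) i = rank w (π i) :=
  card_equiv π (by simp)

theorem rank_of_strictMono {N : ℕ} {f : Fin N → α} (hf : StrictMono f) (m : Fin N) :
    rank f m = m := by
  simp only [rank, hf.lt_iff_lt, filter_gt_eq_Iio, Fin.card_Iio]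

theorem rank_eq_sort_symm {N : ℕ} {w : Fin N → α} (hw : Function.Injective w) (i : Fin N) :
    rank w i = (sort w).symm i := by
  have hsorted : StrictMono (w ∘ sort w) :=
    (monotone_sort w).strictMono_of_injective (hw.comp (sort w).injective)
  rw [← rank_of_strictMono hsorted, rank_comp_perm, Equiv.apply_symm_apply]

theorem card_rank_lt {N : ℕ} {w : Fin N → α} (hw : Function.Injective w) {k : ℕ} (hk : k ≤ N) :
    #{i | rank w i < k} = k := by
  simp_rw [rank_eq_sort_symm hw]
  rw [card_equiv (sort w).symm (t := {m : Fin N | m < k}) (by simp), Fin.card_filter_val_lt,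
    min_eq_right hk]

theorem card_lt_le_iff_le_sort {n : ℕ} (f : Fin n → α) (a : α) (j : Fin n) :
    #{i | f i < a} ≤ j ↔ a ≤ f (sort f j) := by
  have h := lt_card_lt_iff_apply_lt_of_monotone (monotone_sort f) (j := j) (a := a)
  rw [card_equiv (sort f) (t := {i | f i < a}) (by simp)] at h
  simpa only [not_lt, Function.comp_apply] using not_congr h

theorem rank_last {n : ℕ} (w : Fin (n + 1) → α) :
    rank w (Fin.last n) = #{i | Fin.init w i < w (Fin.last n)} := by
  rw [rank, Fin.univ_castSuccEmb, filter_cons, if_neg (lt_irrefl _), filter_map, card_map]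
  rfl

theorem le_sort_init_iff_rank_last_le {n : ℕ} (w : Fin (n + 1) → α) (m : Fin n) :
    w (Fin.last n) ≤ Fin.init w (sort (Fin.init w) m) ↔ rank w (Fin.last n) ≤ m := by
  rw [rank_last, card_lt_le_iff_le_sort]

end Tuple

section Exchangeable

open Tuple

variable {Ω α : Type*} [MeasurableSpace Ω] {P : Measure Ω}
  [LinearOrder α] [TopologicalSpace α] [OrderClosedTopology α] [SecondCountableTopology α]
  [MeasurableSpace α] [OpensMeasurableSpace α]

theorem measurable_rank {ι : Type*} [Fintype ι] (i : ι) :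
    Measurable fun w : ι → α => rank w i := by
  simp only [rank, card_filter]
  exact Finset.measurable_sum _ fun j _ =>
    Measurable.ite (measurableSet_lt (measurable_pi_apply j) (measurable_pi_apply i))
      measurable_const measurable_const

theorem measure_rank_lt_eq_of_exchangeable {ι : Type*} [Fintype ι] [DecidableEq ι]
    {X : Ω → ι → α} (hX : Measurable X)
    (hexch : ∀ π : Equiv.Perm ι, P.map (fun ω i => X ω (π i)) = P.map X) (i j : ι) (k : ℕ) :
    P {ω | rank (X ω) i < k} = P {ω | rank (X ω) j < k} := by
  have hS : MeasurableSet {w : ι → α | rank w j < k} := measurable_rank j measurableSet_Iio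
  have hmap := congrArg (· {w : ι → α | rank w j < k}) (hexch (Equiv.swap j i))
  have hXπ : Measurable fun ω l => X ω (Equiv.swap j i l) :=
    measurable_pi_lambda _ fun l => (measurable_pi_apply _).comp hX
  rw [Measure.map_apply hXπ hS, Measure.map_apply hX hS] at hmap
  have hpre : (fun ω l => X ω (Equiv.swap j i l)) ⁻¹' {w | rank w j < k} =
      {ω | rank (X ω) i < k} := by
    ext ω
    simp [← Function.comp_def (X ω), rank_comp_perm]
  rwa [hpre] at hmap

open Classical in
theorem sum_measure_eq_of_ae_card_eq [IsProbabilityMeasure P] {ι : Type*} [Fintype ι]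
    {A : ι → Set Ω} (hA : ∀ i, MeasurableSet (A i)) {m : ℕ}
    (h : ∀ᵐ ω ∂P, #{i | ω ∈ A i} = m) :
    ∑ i, P (A i) = m := by
  calc ∑ i, P (A i) = ∑ i, ∫⁻ ω, (A i).indicator 1 ω ∂P := by
        simp only [lintegral_indicator_one (hA _)]
    _ = ∫⁻ ω, ∑ i, (A i).indicator 1 ω ∂P :=
        (lintegral_finsetSum _ fun i _ => measurable_one.indicator (hA i)).symm
    _ = ∫⁻ _, (m : ℝ≥0∞) ∂P := by
        refine lintegral_congr_ae (h.mono fun ω hω => ?_)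
        simp only [Set.indicator_apply, Pi.one_apply, ← hω]
        rw [natCast_card_filter, sum_boole]
    _ = m := by simp

theorem measure_rank_lt_eq_div [IsProbabilityMeasure P] {N : ℕ} {X : Ω → Fin N → α}
    (hX : Measurable X)
    (hexch : ∀ π : Equiv.Perm (Fin N), P.map (fun ω i => X ω (π i)) = P.map X)
    (hinj : ∀ᵐ ω ∂P, Function.Injective (X ω)) {k : ℕ} (hk : k ≤ N) (i : Fin N) :
    P {ω | rank (X ω) i < k} = k / N := by
  have hA (j : Fin N) : MeasurableSet {ω | rank (X ω) j < k} :=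
    (measurable_rank j).comp hX measurableSet_Iio
  have hsum : ∑ j, P {ω | rank (X ω) j < k} = k :=
    sum_measure_eq_of_ae_card_eq hA
      (hinj.mono fun ω hω => by convert card_rank_lt hω hk using 2; simp only [Set.mem_ofPred_eq])
  simp only [measure_rank_lt_eq_of_exchangeable hX hexch _ i, sum_const, card_univ,
    Fintype.card_fin, nsmul_eq_mul] at hsum
  rw [ENNReal.eq_div_iff (by simp [i.pos.ne']) (by simp), hsum]

end Exchangeable

/-- Split conformal upper coverage bound: for exchangeable, almost surely distinct scores
`s₁,…,sₙ,s_{n+1}` and `τ` the `⌈(n+1)(1−α)⌉`-th smallest among `s₁,…,sₙ`,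
`P(s_{n+1} ≤ τ) ≤ 1 − α + 1/(n+1)`. -/
theorem split_conformal_upper_coverage
    {Ω : Type*} [MeasurableSpace Ω] (P : Measure Ω) [IsProbabilityMeasure P]
    (n : ℕ) (α : ℝ)
    (s : Fin (n + 1) → Ω → ℝ) (hmeas : ∀ i, Measurable (s i))
    (hexch : ∀ π : Equiv.Perm (Fin (n + 1)),
      P.map (fun ω => fun i => s (π i) ω) = P.map (fun ω => fun i => s i ω))
    (hdistinct : ∀ᵐ ω ∂P, Function.Injective fun i => s i ω)
    (k : ℕ) (hk : k = ⌈((n : ℝ) + 1) * (1 - α)⌉₊) (hk1 : 1 ≤ k) (hkn : k ≤ n)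
    (τ : Ω → ℝ)
    (hτ : ∀ ω, τ ω = (fun g : Fin n → ℝ => g (Tuple.sort g ⟨k - 1, by omega⟩))
      (fun i : Fin n => s i.castSucc ω)) :
    P {ω | s (Fin.last n) ω ≤ τ ω} ≤ ENNReal.ofReal (1 - α + 1 / ((n : ℝ) + 1)) := by
  let X : Ω → Fin (n + 1) → ℝ := fun ω i => s i ω
  have hevent : {ω | s (Fin.last n) ω ≤ τ ω} = {ω | Tuple.rank (X ω) (Fin.last n) < k} := by
    ext ω
    rw [Set.mem_ofPred_eq, Set.mem_ofPred_eq, hτ]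
    exact (Tuple.le_sort_init_iff_rank_last_le (X ω) _).trans (by dsimp only; omega)
  rw [hevent, measure_rank_lt_eq_div (measurable_pi_lambda X hmeas) hexch hdistinct
    (hkn.trans n.le_succ) (Fin.last n)]
  have hpos : 0 < ((n : ℝ) + 1) * (1 - α) := Nat.ceil_pos.1 (hk ▸ hk1)
  have hceil : (k : ℝ) ≤ ((n : ℝ) + 1) * (1 - α) + 1 := hk ▸ (Nat.ceil_lt_add_one hpos.le).le
  rw [← ENNReal.ofReal_natCast, ← ENNReal.ofReal_natCast,
    ← ENNReal.ofReal_div_of_pos (by positivity)]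
  refine ENNReal.ofReal_le_ofReal ?_
  rw [div_le_iff₀ (by positivity)]
  calc (k : ℝ) ≤ ((n : ℝ) + 1) * (1 - α) + 1 := hceil
    _ = (1 - α + 1 / ((n : ℝ) + 1)) * ((n + 1 : ℕ) : ℝ) := by push_cast; field_simp
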